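/- For θ > 0 and n ≥ 1, defining q(n:m) = (n!/(n-m)!)·([θ]_{n-m}/[θ]_n)·1/(m·h_θ(n)) for 1 ≤ m ≤ n, one has ∑_{m=1}^n q(n:m) = 1. -/

import Mathlib

noncomputable def risingFact (x : ℝ) (k : ℕ) : ℝ := ∏ i ∈ Finset.range k, (x + i)

noncomputable def genHarmonic (θ : ℝ) (k : ℕ) : ℝ := ∑ i ∈ Finset.range k, 1 / (θ + i)

/-!
With `c k = [θ]_k / k!` and `k = n - m`, the claim is `∑_{k<n} c k / (n - k) = c n · h_θ(n)`.
Both sides `u n` satisfy `(n + 1) u (n + 1) = (θ + n) u n + c n`: on the left because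
`(n + 1) / (n + 1 - k) = 1 + k / (n + 1 - k)` and `k c k = (θ + k - 1) c (k - 1)`, on the right
because `(n + 1) c (n + 1) = (θ + n) c n` and `h_θ(n + 1) = h_θ(n) + 1 / (θ + n)`.
-/

open Finset Nat

lemma risingFact_succ (x : ℝ) (k : ℕ) : risingFact x (k + 1) = risingFact x k * (x + k) :=
  prod_range_succ _ _

lemma risingFact_pos {x : ℝ} (hx : 0 < x) (k : ℕ) : 0 < risingFact x k :=
  prod_pos fun i _ => by positivity

lemma genHarmonic_succ (θ : ℝ) (k : ℕ) :
    genHarmonic θ (k + 1) = genHarmonic θ k + 1 / (θ + k) :=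
  sum_range_succ _ _

lemma genHarmonic_pos {θ : ℝ} (hθ : 0 < θ) {k : ℕ} (hk : k ≠ 0) : 0 < genHarmonic θ k :=
  sum_pos (fun i _ => by positivity) (nonempty_range_iff.mpr hk)

lemma succ_mul_risingFact_succ_div_factorial (x : ℝ) (k : ℕ) :
    (k + 1) * (risingFact x (k + 1) / (k + 1)!) = (x + k) * (risingFact x k / k !) := by
  rw [risingFact_succ, factorial_succ]
  push_cast
  field_simp

lemma succ_mul_sum_risingFact_div_factorial_div_sub (x : ℝ) (n : ℕ) :
    (n + 1) * ∑ k ∈ range (n + 1), risingFact x k / k ! / ((n + 1 : ℝ) - k) =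
      (x + n) * ∑ k ∈ range n, risingFact x k / k ! / ((n : ℝ) - k) +
        risingFact x n / n ! := by
  have hsplit : ∀ k ∈ range (n + 1), (n + 1) * (risingFact x k / k ! / ((n + 1 : ℝ) - k)) =
      risingFact x k / k ! + k * (risingFact x k / k !) / ((n + 1 : ℝ) - k) := by
    intro k hk
    have : (n + 1 : ℝ) - k ≠ 0 := by
      rw [mem_range] at hk
      rw [sub_ne_zero]; exact_mod_cast hk.ne'
    field_simp
    ring
  have hshift : ∀ k ∈ range n, ((k + 1 : ℕ) : ℝ) * (risingFact x (k + 1) / (k + 1)!) /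
      ((n + 1 : ℝ) - (k + 1 : ℕ)) =
      (x + n) * (risingFact x k / k ! / ((n : ℝ) - k)) - risingFact x k / k ! := by
    intro k hk
    have : (n : ℝ) - k ≠ 0 := by
      rw [mem_range] at hk
      rw [sub_ne_zero]; exact_mod_cast hk.ne'
    push_cast
    rw [succ_mul_risingFact_succ_div_factorial, add_sub_add_right_eq_sub]
    field_simp
    ring
  rw [mul_sum, sum_congr rfl hsplit, sum_add_distrib,
    sum_range_succ' (fun k : ℕ => (k : ℝ) * (risingFact x k / k !) / ((n + 1 : ℝ) - k)),
    sum_congr rfl hshift, sum_sub_distrib, ← mul_sum, sum_range_succ]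
  simp only [CharP.cast_eq_zero, zero_mul, zero_div, add_zero]
  ring

lemma sum_risingFact_div_factorial_div_sub {x : ℝ} (hx : ∀ k : ℕ, x + k ≠ 0) (n : ℕ) :
    ∑ k ∈ range n, risingFact x k / k ! / ((n : ℝ) - k) =
      risingFact x n / n ! * genHarmonic x n := by
  induction n with
  | zero => simp [genHarmonic]
  | succ n ih =>
    have hn : (n + 1 : ℝ) ≠ 0 := by positivity
    apply mul_left_cancel₀ hn
    push_cast
    rw [succ_mul_sum_risingFact_div_factorial_div_sub, ih, ← mul_assoc ((n : ℝ) + 1),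
      succ_mul_risingFact_succ_div_factorial, genHarmonic_succ]
    field_simp [hx n]

lemma sum_Icc_one_eq_sum_range_sub {M : Type*} [AddCommMonoid M] (f : ℕ → M) (n : ℕ) :
    ∑ m ∈ Icc 1 n, f m = ∑ k ∈ range n, f (n - k) := by
  refine sum_nbij' (n - ·) (n - ·) ?_ ?_ ?_ ?_ ?_ <;> intro m hm <;>
    simp only [mem_Icc, mem_range] at hm ⊢
  any_goals omega
  rw [Nat.sub_sub_self hm.2]

theorem q_new_sums_to_one (θ : ℝ) (hθ : 0 < θ) (n : ℕ) (hn : 1 ≤ n) :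
    ∑ m ∈ Finset.Icc 1 n,
      ((n.factorial : ℝ) / ((n - m).factorial : ℝ)) *
        (risingFact θ (n - m) / risingFact θ n) * (1 / ((m : ℝ) * genHarmonic θ n)) = 1 := by
  have hR : risingFact θ n ≠ 0 := (risingFact_pos hθ n).ne'
  have hH : genHarmonic θ n ≠ 0 := (genHarmonic_pos hθ (by omega)).ne'
  have hterm : ∀ k ∈ range n,
      (n ! : ℝ) / (n - (n - k))! * (risingFact θ (n - (n - k)) / risingFact θ n) *
        (1 / (((n - k : ℕ) : ℝ) * genHarmonic θ n)) =
      n ! / (risingFact θ n * genHarmonic θ n) * (risingFact θ k / k ! / ((n : ℝ) - k)) := by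
    intro k hk
    rw [mem_range] at hk
    rw [Nat.sub_sub_self hk.le, Nat.cast_sub hk.le, one_div, mul_inv]
    ring
  rw [sum_Icc_one_eq_sum_range_sub, sum_congr rfl hterm, ← mul_sum,
    sum_risingFact_div_factorial_div_sub (fun k => by positivity)]
  field_simp
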